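/- Under the RU-QLP setup, for every i = 1,…,k, the sine of the angle between the i-th left singular vector u_i of A and the column space of Q satisfies ‖(I − QQ^T)u_i‖_2 ≤ δ_i^{2q+2} ‖Φ̂2 Φ̂1^†‖_2 / √(1 + γ^{4q+4} ‖Φ̂2 Φ̂1^†‖_2²). -/

import Mathlib

/-! Put `z = Φ̂₁^† eᵢ`, so that `Uᵀ Φ z` has head `eᵢ` and tail `c = Φ̂₂ Φ̂₁^† eᵢ`. The vector
`σᵢ^{-(2q+2)} A (AᵀA)^q Aᵀ Φ z = U h`, where `h_j = (σ_j / σᵢ)^{2q+2} (Uᵀ Φ z)_j`, lies in the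
range of `A P̄ = Q R`. Its coordinates give `⟨uᵢ, U h⟩ = 1` and
`N = ‖h‖² ≤ 1 + δᵢ^{4q+4} ‖c‖² ≤ 1 + δᵢ^{4q+4} ‖Φ̂₂ Φ̂₁^†‖²`, so the distance from `uᵢ` to the
range of `Q` is at most `‖uᵢ - U h / N‖ = √(1 - 1/N)`, which is the bound since `γ ≤ δᵢ`. -/

open Matrix MeasureTheory ProbabilityTheory

noncomputable section

/-- Euclidean norm of a vector. -/
noncomputable def vecNorm {a : ℕ} (v : Fin a → ℝ) : ℝ :=
  Real.sqrt (∑ i, v i ^ 2)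

/-- Frobenius norm of a matrix. -/
noncomputable def frobNorm {a b : ℕ} (M : Matrix (Fin a) (Fin b) ℝ) : ℝ :=
  Real.sqrt (∑ i, ∑ j, M i j ^ 2)

/-- Spectral norm (ℓ² operator norm) of a matrix. -/
noncomputable def specNorm {a b : ℕ} (M : Matrix (Fin a) (Fin b) ℝ) : ℝ :=
  ‖LinearMap.toContinuousLinearMap (Matrix.toEuclideanLin M)‖

/-- `mNorm true` is the spectral norm, `mNorm false` is the Frobenius norm. -/
noncomputable def mNorm (t : Bool) {a b : ℕ} (M : Matrix (Fin a) (Fin b) ℝ) : ℝ :=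
  if t then specNorm M else frobNorm M

/-- The `i`-th largest singular value of a matrix (0-indexed, so `sval M 0` is the
largest singular value): the square root of the `i`-th largest eigenvalue of `MᵀM`. -/
noncomputable def sval {a b : ℕ} (M : Matrix (Fin a) (Fin b) ℝ) (i : Fin b) : ℝ :=
  Real.sqrt ((show (Mᵀ * M).IsHermitian by
      simpa using Matrix.isHermitian_conjTranspose_mul_self M).eigenvalues
    (Tuple.sort (show (Mᵀ * M).IsHermitian by
      simpa using Matrix.isHermitian_conjTranspose_mul_self M).eigenvalues i.rev))

/-- The Moore–Penrose pseudoinverse of a full-row-rank matrix. -/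
noncomputable def rowPinv {a b : ℕ} (M : Matrix (Fin a) (Fin b) ℝ) : Matrix (Fin b) (Fin a) ℝ :=
  Mᵀ * (M * Mᵀ)⁻¹

/-- The constant ω = ω₁ω₂, ω₁ = √(m−k) + √(k+p) + 7, ω₂ = 4e√(k+p)/(p+1). -/
noncomputable def omegaConst (m k p : ℕ) : ℝ :=
  (Real.sqrt ((m : ℝ) - (k : ℝ)) + Real.sqrt ((k : ℝ) + (p : ℝ)) + 7) *
    (4 * Real.exp 1 * Real.sqrt ((k : ℝ) + (p : ℝ)) / ((p : ℝ) + 1))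

/-- The constant C = √(k/(p−1)) + e√((m−k)(p+k))/p. -/
noncomputable def CConst (m k p : ℕ) : ℝ :=
  Real.sqrt ((k : ℝ) / ((p : ℝ) - 1)) +
    Real.exp 1 * Real.sqrt (((m : ℝ) - (k : ℝ)) * ((p : ℝ) + (k : ℝ))) / (p : ℝ)

section MatrixAlgebra

variable {R : Type*} {l m n : Type*}

theorem Matrix.mul_mul_pow_mul [Semiring R] [Fintype m] [Fintype n] [DecidableEq m]
    [DecidableEq n] (A : Matrix m n R) (B : Matrix n m R) (q : ℕ) :
    A * (B * A) ^ q * B = (A * B) ^ (q + 1) := by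
  induction q with
  | zero => simp
  | succ q ih => rw [pow_succ (B * A), pow_succ (A * B), ← ih]; simp only [Matrix.mul_assoc]

theorem Matrix.conj_pow_succ [Semiring R] [Fintype m] [Fintype n] [DecidableEq m]
    [DecidableEq n] (U : Matrix m n R) (hU : Uᵀ * U = 1)
    (X : Matrix n n R) (r : ℕ) : (U * X * Uᵀ) ^ (r + 1) = U * X ^ (r + 1) * Uᵀ := by
  induction r with
  | zero => simp
  | succ r ih =>
    rw [pow_succ, ih, pow_succ X (r + 1)]
    simp only [Matrix.mul_assoc]
    rw [← Matrix.mul_assoc Uᵀ U, hU, Matrix.one_mul]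

theorem Matrix.svd_mul_gram_pow_mul_transpose [CommRing R] [Fintype l] [Fintype m] [Fintype n]
    [DecidableEq l] [DecidableEq m] [DecidableEq n]
    {A : Matrix m l R} {U : Matrix m n R} {V : Matrix l n R} {σ : n → R} (hU : Uᵀ * U = 1)
    (hV : Vᵀ * V = 1) (hA : A = U * diagonal σ * Vᵀ) (q : ℕ) :
    A * ((Aᵀ * A) ^ q * Aᵀ) = U * diagonal (σ ^ (2 * q + 2)) * Uᵀ := by
  have hAAt : A * Aᵀ = U * diagonal (σ ^ 2) * Uᵀ := by
    simp only [hA, transpose_mul, transpose_transpose, diagonal_transpose, Matrix.mul_assoc]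
    rw [← Matrix.mul_assoc Vᵀ V, hV, Matrix.one_mul, ← Matrix.mul_assoc (diagonal σ),
      diagonal_mul_diagonal, sq]
    rfl
  rw [← Matrix.mul_assoc, mul_mul_pow_mul, hAAt, conj_pow_succ U hU, diagonal_pow, ← pow_mul]
  ring_nf

theorem Matrix.svd_mulVec_gram_pow_mul_transpose_mul [CommRing R] [Fintype l] [Fintype m]
    [Fintype n] [DecidableEq l] [DecidableEq m] [DecidableEq n] {e : Type*} [Fintype e]
    {A : Matrix m l R} {U : Matrix m n R} {V : Matrix l n R} {σ : n → R} (hU : Uᵀ * U = 1)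
    (hV : Vᵀ * V = 1) (hA : A = U * diagonal σ * Vᵀ) (q : ℕ) (Φ : Matrix m e R) (z : e → R) :
    A *ᵥ (((Aᵀ * A) ^ q * Aᵀ * Φ) *ᵥ z) =
      U *ᵥ fun j => σ j ^ (2 * q + 2) * ((Uᵀ * Φ) *ᵥ z) j := by
  rw [mulVec_mulVec, ← Matrix.mul_assoc A, svd_mul_gram_pow_mul_transpose hU hV hA,
    Matrix.mul_assoc, Matrix.mul_assoc, ← mulVec_mulVec, ← mulVec_mulVec]
  congr 1
  ext j
  exact mulVec_diagonal _ _ _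

theorem Matrix.mulVec_mem_range_of_range_eq [CommRing R] {d e : Type*} [Fintype n] [Fintype d]
    [Fintype e] {A : Matrix m n R} {P : Matrix n d R} {M : Matrix n e R} {Q : Matrix m d R}
    {C : Matrix d d R}
    (hPM : LinearMap.range P.mulVecLin = LinearMap.range M.mulVecLin) (hAP : A * P = Q * C)
    (x : e → R) : A *ᵥ (M *ᵥ x) ∈ LinearMap.range Q.mulVecLin := by
  obtain ⟨y, hy⟩ : M *ᵥ x ∈ LinearMap.range P.mulVecLin := hPM ▸ ⟨x, rfl⟩
  refine ⟨C *ᵥ y, ?_⟩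
  rw [mulVecLin_apply, mulVec_mulVec, ← hAP, ← mulVec_mulVec, ← hy, mulVecLin_apply]

end MatrixAlgebra

theorem mul_rowPinv_of_rank_eq {k d : ℕ} {M : Matrix (Fin k) (Fin d) ℝ} (h : M.rank = k) :
    M * rowPinv M = 1 := by
  have hMMt : (M * Mᵀ).rank = k := by rw [rank_self_mul_transpose, h]
  have hrange : LinearMap.range (M * Mᵀ).mulVecLin = ⊤ :=
    Submodule.eq_top_of_finrank_eq (by rw [← rank, hMMt, Module.finrank_fin_fun])
  have hunit : IsUnit (M * Mᵀ) :=
    mulVec_surjective_iff_isUnit.mp (LinearMap.range_eq_top.mp hrange)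
  rw [rowPinv, ← Matrix.mul_assoc, mul_nonsing_inv _ ((isUnit_iff_isUnit_det _).mp hunit)]

theorem Fin.sum_univ_eq_sum_castLE_add_sum_tail {M : Type*} [AddCommMonoid M] {k n : ℕ}
    (hk : k ≤ n) (f : Fin n → M) :
    ∑ j, f j = ∑ j : Fin k, f (Fin.castLE hk j) + ∑ l : Fin (n - k), f ⟨k + l, by omega⟩ := by
  have hn : k + (n - k) = n := by omega
  rw [← Fintype.sum_equiv (finCongr hn) (fun j => f (finCongr hn j)) f (fun _ => rfl),
    Fin.sum_univ_add]
  rfl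

theorem sqrt_one_sub_inv_le_div_sqrt {N x y : ℝ} (hN : 1 ≤ N) (hNx : N ≤ 1 + x ^ 2) (hy : 0 ≤ y)
    (hyx : y ≤ x) : √(1 - N⁻¹) ≤ x / √(1 + y ^ 2) := by
  have hx : 0 ≤ x := hy.trans hyx
  have hle : 1 - N⁻¹ ≤ x ^ 2 / (1 + y ^ 2) :=
    calc 1 - N⁻¹ ≤ 1 - (1 + x ^ 2)⁻¹ := by gcongr
      _ = x ^ 2 / (1 + x ^ 2) := by field_simp; ring
      _ ≤ x ^ 2 / (1 + y ^ 2) := by gcongr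
  calc √(1 - N⁻¹) ≤ √(x ^ 2 / (1 + y ^ 2)) := Real.sqrt_le_sqrt hle
    _ = x / √(1 + y ^ 2) := by rw [Real.sqrt_div' _ (by positivity), Real.sqrt_sq hx]

section VecNorm

variable {m n d k : ℕ}

theorem vecNorm_eq_sqrt_dotProduct (v : Fin n → ℝ) : vecNorm v = √(v ⬝ᵥ v) := by
  simp [vecNorm, dotProduct, sq]

theorem vecNorm_nonneg (v : Fin n → ℝ) : 0 ≤ vecNorm v := Real.sqrt_nonneg _

theorem vecNorm_sq (v : Fin n → ℝ) : vecNorm v ^ 2 = v ⬝ᵥ v := by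
  have hv : 0 ≤ v ⬝ᵥ v := dotProduct_self_star_nonneg v
  rw [vecNorm_eq_sqrt_dotProduct, Real.sq_sqrt hv]

theorem vecNorm_single_one (i : Fin n) : vecNorm (Pi.single i 1 : Fin n → ℝ) = 1 := by
  simp [vecNorm_eq_sqrt_dotProduct]

theorem vecNorm_mulVec_le (M : Matrix (Fin m) (Fin n) ℝ) (x : Fin n → ℝ) :
    vecNorm (M *ᵥ x) ≤ specNorm M * vecNorm x := by
  have hnorm : ∀ {a : ℕ} (v : Fin a → ℝ), vecNorm v = ‖(WithLp.equiv 2 (Fin a → ℝ)).symm v‖ := by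
    intro a v
    simp [vecNorm, EuclideanSpace.norm_eq, Real.norm_eq_abs, sq_abs]
  rw [hnorm, hnorm]
  exact (LinearMap.toContinuousLinearMap (toEuclideanLin M)).le_opNorm _

theorem dotProduct_mulVec_mulVec (M : Matrix (Fin m) (Fin n) ℝ) (N : Matrix (Fin m) (Fin d) ℝ)
    (x : Fin n → ℝ) (y : Fin d → ℝ) : (M *ᵥ x) ⬝ᵥ (N *ᵥ y) = x ⬝ᵥ ((Mᵀ * N) *ᵥ y) := by
  rw [← mulVec_mulVec, mulVec_transpose, dotProduct_comm, dotProduct_mulVec, dotProduct_comm]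

theorem vecNorm_mulVec_of_transpose_mul_self {U : Matrix (Fin m) (Fin n) ℝ} (hU : Uᵀ * U = 1)
    (x : Fin n → ℝ) : vecNorm (U *ᵥ x) = vecNorm x := by
  rw [vecNorm_eq_sqrt_dotProduct, vecNorm_eq_sqrt_dotProduct, dotProduct_mulVec_mulVec, hU,
    one_mulVec]

theorem vecNorm_orthProj_le {Q : Matrix (Fin m) (Fin d) ℝ} (hQ : Qᵀ * Q = 1)
    (u : Fin m → ℝ) (v : Fin d → ℝ) :
    vecNorm ((1 - Q * Qᵀ) *ᵥ u) ≤ vecNorm (u - Q *ᵥ v) := by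
  set r := (1 - Q * Qᵀ) *ᵥ u
  set s := Qᵀ *ᵥ u - v
  have hdecomp : u - Q *ᵥ v = r + Q *ᵥ s := by
    simp only [r, s, mulVec_sub, sub_mulVec, one_mulVec, mulVec_mulVec]
    abel
  have horth : r ⬝ᵥ (Q *ᵥ s) = 0 := by
    have : (1 - Q * Qᵀ)ᵀ * Q = 0 := by
      rw [transpose_sub, transpose_one, transpose_mul, transpose_transpose, Matrix.sub_mul,
        Matrix.one_mul, Matrix.mul_assoc, hQ, Matrix.mul_one, sub_self]
    rw [dotProduct_mulVec_mulVec, this, zero_mulVec, dotProduct_zero]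
  rw [hdecomp, vecNorm_eq_sqrt_dotProduct, vecNorm_eq_sqrt_dotProduct]
  apply Real.sqrt_le_sqrt
  have hpyth : (r + Q *ᵥ s) ⬝ᵥ (r + Q *ᵥ s) = r ⬝ᵥ r + (Q *ᵥ s) ⬝ᵥ (Q *ᵥ s) := by
    simp only [add_dotProduct, dotProduct_add, dotProduct_comm (Q *ᵥ s) r, horth]
    ring
  rw [hpyth]
  exact le_add_of_nonneg_right (dotProduct_self_star_nonneg _)

theorem vecNorm_single_sub_inv_smul {h : Fin n → ℝ} {i : Fin n} (hi : h i = 1) :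
    vecNorm (Pi.single i 1 - (h ⬝ᵥ h)⁻¹ • h) = √(1 - (h ⬝ᵥ h)⁻¹) := by
  have hN : h ⬝ᵥ h ≠ 0 := by
    intro h0
    have := congrFun (dotProduct_self_eq_zero.mp h0) i
    simp [hi] at this
  rw [vecNorm_eq_sqrt_dotProduct]
  congr 1
  simp only [sub_dotProduct, dotProduct_sub, dotProduct_smul, smul_dotProduct, smul_eq_mul]
  simp only [single_dotProduct, dotProduct_single, hi, Pi.single_eq_same]
  field_simp
  ring

theorem one_le_dotProduct_self {h : Fin n → ℝ} {i : Fin n} (hi : h i = 1) :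
    1 ≤ h ⬝ᵥ h := by
  simpa [hi, dotProduct] using
    Finset.single_le_sum (fun j _ => mul_self_nonneg (h j)) (Finset.mem_univ i)

theorem vecNorm_orthProj_col_le {Q : Matrix (Fin m) (Fin d) ℝ} (hQ : Qᵀ * Q = 1)
    {U : Matrix (Fin m) (Fin n) ℝ} (hU : Uᵀ * U = 1) {h : Fin n → ℝ} {i : Fin n} (hi : h i = 1)
    (hmem : U *ᵥ h ∈ LinearMap.range Q.mulVecLin) :
    vecNorm ((1 - Q * Qᵀ) *ᵥ fun r => U r i) ≤ √(1 - (h ⬝ᵥ h)⁻¹) := by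
  obtain ⟨y, hy⟩ := hmem
  have hcol : (fun r => U r i) = U *ᵥ Pi.single i 1 := by ext; simp [mulVec_single]
  calc _ ≤ vecNorm ((fun r => U r i) - Q *ᵥ ((h ⬝ᵥ h)⁻¹ • y)) := vecNorm_orthProj_le hQ _ _
    _ = vecNorm (U *ᵥ (Pi.single i 1 - (h ⬝ᵥ h)⁻¹ • h)) := by
        rw [mulVec_smul, ← mulVecLin_apply, hy, hcol, mulVec_sub, mulVec_smul]
    _ = _ := by rw [vecNorm_mulVec_of_transpose_mul_self hU, vecNorm_single_sub_inv_smul hi]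

theorem dotProduct_self_le_of_head_tail (hk : k ≤ n) {h : Fin n → ℝ} {i : Fin k}
    {c : Fin (n - k) → ℝ} {s : ℝ} (hhead : ∀ j, h (Fin.castLE hk j) = (Pi.single i 1 : Fin k → ℝ) j)
    (htail : ∀ l : Fin (n - k), |h ⟨k + l, by omega⟩| ≤ s * |c l|) :
    h ⬝ᵥ h ≤ 1 + (s * vecNorm c) ^ 2 := by
  have hterm : ∀ l : Fin (n - k),
      h ⟨k + l, by omega⟩ * h ⟨k + l, by omega⟩ ≤ s ^ 2 * (c l * c l) := by
    intro l
    rw [← sq, ← sq_abs, ← sq, ← sq_abs (c l), ← mul_pow]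
    exact pow_le_pow_left₀ (abs_nonneg _) (htail l) 2
  rw [dotProduct, Fin.sum_univ_eq_sum_castLE_add_sum_tail hk, mul_pow, vecNorm_sq, dotProduct,
    Finset.mul_sum]
  simp only [hhead]
  exact add_le_add (by simp [Pi.single_apply]) (Finset.sum_le_sum fun l _ => hterm l)

theorem vecNorm_orthProj_col_le_of_head_tail {Q : Matrix (Fin m) (Fin d) ℝ}
    (hQ : Qᵀ * Q = 1) {U : Matrix (Fin m) (Fin n) ℝ} (hU : Uᵀ * U = 1) (hk : k ≤ n) {i : Fin k}
    {h : Fin n → ℝ} {c : Fin (n - k) → ℝ} {s t γ : ℝ}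
    (hhead : ∀ j, h (Fin.castLE hk j) = (Pi.single i 1 : Fin k → ℝ) j)
    (htail : ∀ l : Fin (n - k), |h ⟨k + l, by omega⟩| ≤ s * |c l|)
    (hmem : U *ᵥ h ∈ LinearMap.range Q.mulVecLin) (hc : vecNorm c ≤ t) (hγ : 0 ≤ γ)
    (hγs : γ ≤ s) :
    vecNorm ((1 - Q * Qᵀ) *ᵥ fun r => U r (Fin.castLE hk i)) ≤ s * t / √(1 + (γ * t) ^ 2) := by
  have hi : h (Fin.castLE hk i) = 1 := by simp [hhead]
  have hs : 0 ≤ s := hγ.trans hγs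
  have ht : 0 ≤ t := (vecNorm_nonneg c).trans hc
  have hN : h ⬝ᵥ h ≤ 1 + (s * t) ^ 2 := by
    refine (dotProduct_self_le_of_head_tail hk hhead htail).trans ?_
    have := vecNorm_nonneg c
    gcongr
  exact (vecNorm_orthProj_col_le hQ hU hi hmem).trans
    (sqrt_one_sub_inv_le_div_sqrt (one_le_dotProduct_self hi) hN (by positivity) (by gcongr))

theorem vecNorm_orthProj_col_le_of_scaled_head_tail {Q : Matrix (Fin m) (Fin d) ℝ}
    (hQ : Qᵀ * Q = 1) {U : Matrix (Fin m) (Fin n) ℝ} (hU : Uᵀ * U = 1) (hkn : k < n)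
    {σ : Fin n → ℝ} (hσ : Antitone σ) (hσ0 : ∀ j, 0 ≤ σ j) {i : Fin k}
    (hσi : 0 < σ (Fin.castLE hkn.le i)) (E : ℕ) {g : Fin n → ℝ} {c : Fin (n - k) → ℝ} {t : ℝ}
    (hhead : ∀ j, g (Fin.castLE hkn.le j) = (Pi.single i 1 : Fin k → ℝ) j)
    (htail : ∀ l : Fin (n - k), g ⟨k + l, by omega⟩ = c l)
    (hmem : U *ᵥ (fun j => (σ j / σ (Fin.castLE hkn.le i)) ^ E * g j) ∈
      LinearMap.range Q.mulVecLin) (hc : vecNorm c ≤ t) :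
    vecNorm ((1 - Q * Qᵀ) *ᵥ fun r => U r (Fin.castLE hkn.le i)) ≤
      (σ ⟨k, hkn⟩ / σ (Fin.castLE hkn.le i)) ^ E * t /
        √(1 + ((σ ⟨n - 1, by omega⟩ / σ ⟨0, by omega⟩) ^ E * t) ^ 2) := by
  set i' := Fin.castLE hkn.le i
  have hσle : ∀ {a b : Fin n}, (a : ℕ) ≤ b → σ b ≤ σ a := fun hab => hσ (Fin.le_def.mpr hab)
  refine vecNorm_orthProj_col_le_of_head_tail hQ hU hkn.le (fun j => ?_) (fun l => ?_) hmem hc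
    (pow_nonneg (div_nonneg (hσ0 _) (hσ0 _)) E) ?_
  · rw [hhead]
    rcases eq_or_ne j i with rfl | hji
    · simp [i', div_self hσi.ne']
    · simp [hji]
  · have hσl := hσ0 ⟨k + l, by omega⟩
    rw [htail, abs_mul, abs_of_nonneg (by positivity)]
    gcongr
    exact hσle (show k ≤ k + l by omega)
  · gcongr
    · exact div_nonneg (hσ0 _) (hσ0 _)
    · exact hσ0 _
    · exact hσle (show k ≤ n - 1 by omega)
    · exact hσle (Nat.zero_le _)

end VecNorm

theorem ruqlp_sin_angle_Q_ui_bound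
    (m n k q : ℕ) (hkn : k < n)
    (d : ℕ)
    (A U : Matrix (Fin m) (Fin n) ℝ) (V : Matrix (Fin n) (Fin n) ℝ) (σ : Fin n → ℝ)
    (hU : Uᵀ * U = 1) (hV : Vᵀ * V = 1)
    (hσ : Antitone σ) (hσ0 : ∀ i, 0 ≤ σ i)
    (hA : A = U * Matrix.diagonal σ * Vᵀ)
    (hgap : σ ⟨k, hkn⟩ < σ ⟨k - 1, by omega⟩)
    (Φ : Matrix (Fin m) (Fin d) ℝ)
    (Uk : Matrix (Fin m) (Fin k) ℝ) (hUk : Uk = U.submatrix id (Fin.castLE hkn.le))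
    (Uperp : Matrix (Fin m) (Fin (n - k)) ℝ)
    (hUperp : Uperp = U.submatrix id fun i => ⟨k + i.1, by have := i.2; omega⟩)
    (Φ1 : Matrix (Fin k) (Fin d) ℝ) (hΦ1 : Φ1 = Ukᵀ * Φ)
    (Φ2 : Matrix (Fin (n - k)) (Fin d) ℝ) (hΦ2 : Φ2 = Uperpᵀ * Φ)
    (hrank : Φ1.rank = k)
    (Pbar : Matrix (Fin n) (Fin d) ℝ)
    (hPrange : LinearMap.range (Matrix.mulVecLin Pbar)
      = LinearMap.range (Matrix.mulVecLin ((Aᵀ * A) ^ q * Aᵀ * Φ)))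
    (Q : Matrix (Fin m) (Fin d) ℝ) (R : Matrix (Fin d) (Fin d) ℝ)
    (hQ : Qᵀ * Q = 1) (hQR : A * Pbar = Q * R)
    :
    ∀ i : Fin k,
      vecNorm ((1 - Q * Qᵀ).mulVec fun r => U r (Fin.castLE hkn.le i)) ≤
        (σ ⟨k, hkn⟩ / σ (Fin.castLE hkn.le i)) ^ (2 * q + 2) * specNorm (Φ2 * rowPinv Φ1) /
          Real.sqrt (1 + (σ ⟨n - 1, by omega⟩ / σ ⟨0, by omega⟩) ^ (4 * q + 4) * specNorm (Φ2 * rowPinv Φ1) ^ 2) := by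
  intro i
  set i' := Fin.castLE hkn.le i
  have hσi : 0 < σ i' :=
    ((hσ0 _).trans_lt hgap).trans_le (hσ (Fin.le_def.mpr (show (i : ℕ) ≤ k - 1 by omega)))
  set z := rowPinv Φ1 *ᵥ Pi.single i 1
  set g := (Uᵀ * Φ) *ᵥ z
  have hhead : ∀ j, g (Fin.castLE hkn.le j) = (Pi.single i 1 : Fin k → ℝ) j := fun j => by
    rw [show g (Fin.castLE hkn.le j) = (Φ1 *ᵥ z) j by rw [hΦ1, hUk]; rfl, mulVec_mulVec,
      mul_rowPinv_of_rank_eq hrank, one_mulVec]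
  have htail : ∀ l : Fin (n - k), g ⟨k + l, by omega⟩ = ((Φ2 * rowPinv Φ1) *ᵥ Pi.single i 1) l :=
    fun l => by rw [← mulVec_mulVec, hΦ2, hUperp]; rfl
  have hmem : U *ᵥ (fun j => (σ j / σ i') ^ (2 * q + 2) * g j) ∈ LinearMap.range Q.mulVecLin := by
    have hscale : (fun j => (σ j / σ i') ^ (2 * q + 2) * g j) =
        (σ i' ^ (2 * q + 2))⁻¹ • fun j => σ j ^ (2 * q + 2) * g j := by
      ext j; simp only [div_pow, Pi.smul_apply, smul_eq_mul]; ring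
    rw [hscale, mulVec_smul, ← svd_mulVec_gram_pow_mul_transpose_mul hU hV hA]
    exact Submodule.smul_mem _ _ (mulVec_mem_range_of_range_eq hPrange hQR z)
  have hc := (vecNorm_mulVec_le (Φ2 * rowPinv Φ1) (Pi.single i 1)).trans_eq
    (by rw [vecNorm_single_one, mul_one])
  rw [show ∀ x y : ℝ, x ^ (4 * q + 4) * y ^ 2 = (x ^ (2 * q + 2) * y) ^ 2 by intros; ring]
  exact vecNorm_orthProj_col_le_of_scaled_head_tail hQ hU hkn hσ hσ0 hσi _ hhead htail hmem hc
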